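/- Consider a VSP instance with n vehicles, walks W_j^1,…,W_j^{q_j}, trip request times ρ_j, soft deadlines d_j, hard deadlines d'_j, minimum travel times τ_min,j^i, maximum travel times τ_max,j^i, and separation constants s_{j1,j2}^{i1,i2} ≥ 0, and suppose the big-M constants satisfy M_{j1,j2}^{i1,i2} ≥ max_j d'_j − min_j ρ_j for every constrained pair and M_j ≥ max(d_j − ρ_j, d'_j − d_j) for every j. Then for every natural number m, there exists an assignment of all MIP variables (t, P, N, b, X, l) satisfying all MIP constraints with ∑_j l_j ≤ m if and only if there exists a VSP-feasible schedule t whose number of tardy vehicles, i.e. the cardinality of {j : t_j^{q_j} > d_j}, is at most m. Consequently the optimal value of the MIP objective ∑_j l_j equals the minimum number of tardy vehicles over all VSP-feasible schedules. -/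

import Mathlib

/-- VSP-feasibility of a schedule `t`: trip request time, trip continuity and
hard deadline chain `ρ_j ≤ t_j^1 ≤ … ≤ t_j^{q_j} ≤ d'_j`; travel times
`τmin_j^i ≤ t_j^{i+1} − t_j^i ≤ τmax_j^i`; and separation
`|t_{j1}^{i1} − t_{j2}^{i2}| ≥ s` at coinciding walk vertices. -/
def VSPFeasible {n : ℕ} {V : Type} (q : Fin n → ℕ) (hq : ∀ j, 0 < q j)
    (W : (j : Fin n) → Fin (q j) → V)
    (ρ d' : Fin n → ℝ)
    (τmin τmax : (j : Fin n) → Fin (q j) → ℝ)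
    (s : (j1 j2 : Fin n) → Fin (q j1) → Fin (q j2) → ℝ)
    (t : (j : Fin n) → Fin (q j) → ℝ) : Prop :=
  (∀ j, ρ j ≤ t j ⟨0, hq j⟩) ∧
  (∀ (j : Fin n) (i : Fin (q j)) (h : i.val + 1 < q j), t j i ≤ t j ⟨i.val + 1, h⟩) ∧
  (∀ j, t j ⟨q j - 1, Nat.sub_lt (hq j) Nat.one_pos⟩ ≤ d' j) ∧
  (∀ (j : Fin n) (i : Fin (q j)) (h : i.val + 1 < q j),
      τmin j i ≤ t j ⟨i.val + 1, h⟩ - t j i ∧ t j ⟨i.val + 1, h⟩ - t j i ≤ τmax j i) ∧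
  (∀ (j1 j2 : Fin n) (i1 : Fin (q j1)) (i2 : Fin (q j2)),
      j1 ≠ j2 → W j1 i1 = W j2 i2 → |t j1 i1 - t j2 i2| ≥ s j1 j2 i1 i2)

/-- The MIP constraints of the VSP formulation: the chain, travel-time and
hard-deadline constraints on `t`; the big-M linearization
`t_{j1}^{i1} − t_{j2}^{i2} = P − N`, `b·s ≤ P ≤ b·M`, `(1−b)·s ≤ N ≤ (1−b)·M`
with binary `b` for every constrained pair; and the tardiness constraints
`d_j − t_j^{q_j} ≤ X_j`, `0 ≤ X_j`, `X_j ≤ M_j·(1 − l_j)`,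
`X_j ≤ d_j − t_j^{q_j} + M_j·l_j` with binary `l_j` for every vehicle. -/
def MIPConstraints {n : ℕ} {V : Type} (q : Fin n → ℕ) (hq : ∀ j, 0 < q j)
    (W : (j : Fin n) → Fin (q j) → V)
    (ρ d d' : Fin n → ℝ)
    (τmin τmax : (j : Fin n) → Fin (q j) → ℝ)
    (s Msep : (j1 j2 : Fin n) → Fin (q j1) → Fin (q j2) → ℝ)
    (Mveh : Fin n → ℝ)
    (t : (j : Fin n) → Fin (q j) → ℝ)
    (P N b : (j1 j2 : Fin n) → Fin (q j1) → Fin (q j2) → ℝ)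
    (X l : Fin n → ℝ) : Prop :=
  (∀ j, ρ j ≤ t j ⟨0, hq j⟩) ∧
  (∀ (j : Fin n) (i : Fin (q j)) (h : i.val + 1 < q j), t j i ≤ t j ⟨i.val + 1, h⟩) ∧
  (∀ j, t j ⟨q j - 1, Nat.sub_lt (hq j) Nat.one_pos⟩ ≤ d' j) ∧
  (∀ (j : Fin n) (i : Fin (q j)) (h : i.val + 1 < q j),
      τmin j i ≤ t j ⟨i.val + 1, h⟩ - t j i ∧ t j ⟨i.val + 1, h⟩ - t j i ≤ τmax j i) ∧
  (∀ (j1 j2 : Fin n) (i1 : Fin (q j1)) (i2 : Fin (q j2)),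
      j1 ≠ j2 → W j1 i1 = W j2 i2 →
      (b j1 j2 i1 i2 = 0 ∨ b j1 j2 i1 i2 = 1) ∧
      t j1 i1 - t j2 i2 = P j1 j2 i1 i2 - N j1 j2 i1 i2 ∧
      b j1 j2 i1 i2 * s j1 j2 i1 i2 ≤ P j1 j2 i1 i2 ∧
      P j1 j2 i1 i2 ≤ b j1 j2 i1 i2 * Msep j1 j2 i1 i2 ∧
      (1 - b j1 j2 i1 i2) * s j1 j2 i1 i2 ≤ N j1 j2 i1 i2 ∧
      N j1 j2 i1 i2 ≤ (1 - b j1 j2 i1 i2) * Msep j1 j2 i1 i2) ∧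
  (∀ j, (l j = 0 ∨ l j = 1) ∧
      d j - t j ⟨q j - 1, Nat.sub_lt (hq j) Nat.one_pos⟩ ≤ X j ∧
      0 ≤ X j ∧
      X j ≤ Mveh j * (1 - l j) ∧
      X j ≤ d j - t j ⟨q j - 1, Nat.sub_lt (hq j) Nat.one_pos⟩ + Mveh j * l j)

/-!
Given a VSP-feasible schedule, the remaining MIP variables can be read off it: `b` records which
of the two vehicles passes a shared vertex first, `P` and `N` are the positive and negative parts
of the time difference, and `l_j` flags tardiness. The big-M constants are large enough because
all time stamps lie in `[min ρ, max d']`. Conversely, in any MIP solution the binary `b` forces one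
of `P`, `N` to vanish and the other to be at least `s`, so `|t_{j1}^{i1} − t_{j2}^{i2}| ≥ s`; and a
tardy vehicle cannot have `l_j = 0`, since then `0 ≤ X_j ≤ d_j − t_j^{q_j} < 0`. Hence the MIP objective values
dominate, and include, the tardy counts of VSP-feasible schedules.
-/

open Finset

theorem Fin.monotone_of_le_next {α : Type*} [Preorder α] {k : ℕ} {f : Fin k → α}
    (h : ∀ (i : Fin k) (hi : i.val + 1 < k), f i ≤ f ⟨i.val + 1, hi⟩) : Monotone f := by
  rintro a ⟨b, hb⟩ (hab : a.val ≤ b)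
  induction b, hab using Nat.le_induction with
  | base => exact le_rfl
  | succ c _ ih => exact (ih (by omega)).trans (h ⟨c, by omega⟩ hb)

theorem Finset.card_filter_le_sum_of_binary {ι R : Type*} [Semiring R] [PartialOrder R]
    [IsOrderedRing R] (s : Finset ι) (p : ι → Prop) [DecidablePred p] {l : ι → R}
    (hl : ∀ i ∈ s, l i = 0 ∨ l i = 1) (hp : ∀ i ∈ s, p i → l i = 1) :
    (#(s.filter p) : R) ≤ ∑ i ∈ s, l i := by
  rw [natCast_card_filter]
  refine sum_le_sum fun i hi => ?_
  split_ifs with hpi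
  · exact (hp i hi hpi).ge
  · rcases hl i hi with h | h <;> simp [h]

/-- The big-M linearization of `s ≤ |x|` used in `MIPConstraints`. -/
def IsBigMSplit (s M x P N b : ℝ) : Prop :=
  (b = 0 ∨ b = 1) ∧ x = P - N ∧ b * s ≤ P ∧ P ≤ b * M ∧ (1 - b) * s ≤ N ∧ N ≤ (1 - b) * M

theorem IsBigMSplit.le_abs {s M x P N b : ℝ} (h : IsBigMSplit s M x P N b) : s ≤ |x| := by
  obtain ⟨hb | hb, hx, hP, hP', hN, hN'⟩ := h <;> subst hb
  · have hP0 : P = 0 := by linarith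
    rw [hx, hP0, zero_sub, abs_neg]
    linarith [le_abs_self N]
  · have hN0 : N = 0 := by linarith
    rw [hx, hN0, sub_zero]
    linarith [le_abs_self P]

theorem isBigMSplit_of_le_abs {s M x : ℝ} (hs : s ≤ |x|) (hM : |x| ≤ M) :
    IsBigMSplit s M x (max x 0) (max (-x) 0) (if 0 ≤ x then 1 else 0) := by
  by_cases hx : 0 ≤ x
  · rw [abs_of_nonneg hx] at hs hM
    simp only [if_pos hx, max_eq_left hx, max_eq_right (neg_nonpos.mpr hx)]
    refine ⟨Or.inr rfl, ?_, ?_, ?_, ?_, ?_⟩ <;> simp [hs, hM]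
  · rw [abs_of_neg (not_le.mp hx)] at hs hM
    have hx' : 0 ≤ -x := by linarith
    simp only [if_neg hx, max_eq_right (not_le.mp hx).le, max_eq_left hx']
    refine ⟨Or.inl rfl, ?_, ?_, ?_, ?_, ?_⟩ <;> simp [hs, hM]

/-- The tardiness constraints of `MIPConstraints`, with `T` the final arrival time. -/
def IsTardinessIndicator (M d T X l : ℝ) : Prop :=
  (l = 0 ∨ l = 1) ∧ d - T ≤ X ∧ 0 ≤ X ∧ X ≤ M * (1 - l) ∧ X ≤ d - T + M * l

theorem IsTardinessIndicator.eq_one_of_lt {M d T X l : ℝ} (h : IsTardinessIndicator M d T X l)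
    (hT : d < T) : l = 1 := by
  obtain ⟨hl | hl, -, hX, -, hX'⟩ := h
  · subst hl
    linarith
  · exact hl

theorem isTardinessIndicator_ite {M d T : ℝ} (hlo : d - T ≤ M) (hhi : T - d ≤ M) :
    IsTardinessIndicator M d T (if d < T then 0 else d - T) (if d < T then 1 else 0) := by
  by_cases hT : d < T
  · simp only [if_pos hT]
    refine ⟨Or.inr rfl, ?_, le_rfl, ?_, ?_⟩ <;> linarith
  · simp only [if_neg hT]
    refine ⟨Or.inl rfl, le_rfl, ?_, ?_, ?_⟩ <;> linarith

section Schedules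

variable {n : ℕ} {V : Type} {q : Fin n → ℕ} {hq : ∀ j, 0 < q j}
  {W : (j : Fin n) → Fin (q j) → V} {ρ d d' : Fin n → ℝ}
  {τmin τmax : (j : Fin n) → Fin (q j) → ℝ}
  {s Msep : (j1 j2 : Fin n) → Fin (q j1) → Fin (q j2) → ℝ}
  {Mveh : Fin n → ℝ} {t : (j : Fin n) → Fin (q j) → ℝ}

variable (hq) in
noncomputable def tardyVehicles (d : Fin n → ℝ) (t : (j : Fin n) → Fin (q j) → ℝ) :
    Finset (Fin n) :=
  univ.filter fun j => d j < t j ⟨q j - 1, Nat.sub_lt (hq j) Nat.one_pos⟩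

theorem VSPFeasible.mem_Icc (h : VSPFeasible q hq W ρ d' τmin τmax s t) (j : Fin n)
    (i : Fin (q j)) : t j i ∈ Set.Icc (ρ j) (d' j) := by
  obtain ⟨hfirst, hchain, hlast, -⟩ := h
  have hmono := Fin.monotone_of_le_next (hchain j)
  exact ⟨(hfirst j).trans (hmono (Nat.zero_le _)),
    (hmono (show i.val ≤ q j - 1 by omega)).trans (hlast j)⟩

theorem MIPConstraints.vspFeasible {P N b : (j1 j2 : Fin n) → Fin (q j1) → Fin (q j2) → ℝ}
    {X l : Fin n → ℝ} (h : MIPConstraints q hq W ρ d d' τmin τmax s Msep Mveh t P N b X l) :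
    VSPFeasible q hq W ρ d' τmin τmax s t :=
  let ⟨hfirst, hchain, hlast, htravel, hsep, _⟩ := h
  ⟨hfirst, hchain, hlast, htravel, fun j1 j2 i1 i2 hne hW =>
    IsBigMSplit.le_abs (hsep j1 j2 i1 i2 hne hW)⟩

theorem MIPConstraints.card_tardyVehicles_le_sum
    {P N b : (j1 j2 : Fin n) → Fin (q j1) → Fin (q j2) → ℝ} {X l : Fin n → ℝ}
    (h : MIPConstraints q hq W ρ d d' τmin τmax s Msep Mveh t P N b X l) :
    (#(tardyVehicles hq d t) : ℝ) ≤ ∑ j, l j := by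
  obtain ⟨-, -, -, -, -, htardy⟩ := h
  exact card_filter_le_sum_of_binary _ _ (fun j _ => (htardy j).1)
    fun j _ => IsTardinessIndicator.eq_one_of_lt (htardy j)

theorem VSPFeasible.exists_mipConstraints
    (hMsep : ∀ (j1 j2 : Fin n) (i1 : Fin (q j1)) (i2 : Fin (q j2)),
        j1 ≠ j2 → W j1 i1 = W j2 i2 → ∀ j' j'' : Fin n, d' j' - ρ j'' ≤ Msep j1 j2 i1 i2)
    (hMveh : ∀ j : Fin n, d j - ρ j ≤ Mveh j ∧ d' j - d j ≤ Mveh j)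
    (h : VSPFeasible q hq W ρ d' τmin τmax s t) :
    ∃ (P N b : (j1 j2 : Fin n) → Fin (q j1) → Fin (q j2) → ℝ) (X l : Fin n → ℝ),
      MIPConstraints q hq W ρ d d' τmin τmax s Msep Mveh t P N b X l ∧
      ∑ j, l j = #(tardyVehicles hq d t) := by
  have habs_le (j1 j2 : Fin n) (i1 : Fin (q j1)) (i2 : Fin (q j2)) (hne : j1 ≠ j2)
      (hW : W j1 i1 = W j2 i2) : |t j1 i1 - t j2 i2| ≤ Msep j1 j2 i1 i2 := by
    have h1 := h.mem_Icc j1 i1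
    have h2 := h.mem_Icc j2 i2
    have := hMsep j1 j2 i1 i2 hne hW j1 j2
    have := hMsep j1 j2 i1 i2 hne hW j2 j1
    rw [abs_le]
    constructor <;> linarith [h1.1, h1.2, h2.1, h2.2]
  have htardy (j : Fin n) := by
    let T := t j ⟨q j - 1, Nat.sub_lt (hq j) Nat.one_pos⟩
    have hT : T ∈ Set.Icc (ρ j) (d' j) := h.mem_Icc j _
    exact isTardinessIndicator_ite (M := Mveh j) (d := d j) (T := T)
      (by linarith [hT.1, (hMveh j).1]) (by linarith [hT.2, (hMveh j).2])
  obtain ⟨hfirst, hchain, hlast, htravel, hsep⟩ := h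
  refine ⟨_, _, _, _, _, ⟨hfirst, hchain, hlast, htravel, fun j1 j2 i1 i2 hne hW =>
    isBigMSplit_of_le_abs (hsep j1 j2 i1 i2 hne hW) (habs_le j1 j2 i1 i2 hne hW), htardy⟩, ?_⟩
  rw [tardyVehicles, natCast_card_filter]

end Schedules

theorem mip_optimum_eq_min_tardy_vehicles_general
    {n : ℕ} {V : Type} (q : Fin n → ℕ) (hq : ∀ j, 0 < q j)
    (W : (j : Fin n) → Fin (q j) → V)
    (ρ d d' : Fin n → ℝ)
    (τmin τmax : (j : Fin n) → Fin (q j) → ℝ)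
    (s Msep : (j1 j2 : Fin n) → Fin (q j1) → Fin (q j2) → ℝ)
    (Mveh : Fin n → ℝ)
    (hMsep : ∀ (j1 j2 : Fin n) (i1 : Fin (q j1)) (i2 : Fin (q j2)),
        j1 ≠ j2 → W j1 i1 = W j2 i2 →
        ∀ j' j'' : Fin n, d' j' - ρ j'' ≤ Msep j1 j2 i1 i2)
    (hMveh : ∀ j : Fin n, d j - ρ j ≤ Mveh j ∧ d' j - d j ≤ Mveh j) :
    (∀ m : ℕ,
      (∃ (t : (j : Fin n) → Fin (q j) → ℝ)
         (P N b : (j1 j2 : Fin n) → Fin (q j1) → Fin (q j2) → ℝ)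
         (X l : Fin n → ℝ),
        MIPConstraints q hq W ρ d d' τmin τmax s Msep Mveh t P N b X l ∧
        ∑ j, l j ≤ (m : ℝ))
      ↔
      (∃ t : (j : Fin n) → Fin (q j) → ℝ,
        VSPFeasible q hq W ρ d' τmin τmax s t ∧
        (Finset.univ.filter
          (fun j : Fin n =>
            d j < t j ⟨q j - 1, Nat.sub_lt (hq j) Nat.one_pos⟩)).card ≤ m)) ∧
    sInf {v : ℝ |
        ∃ (t : (j : Fin n) → Fin (q j) → ℝ)
          (P N b : (j1 j2 : Fin n) → Fin (q j1) → Fin (q j2) → ℝ)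
          (X l : Fin n → ℝ),
          MIPConstraints q hq W ρ d d' τmin τmax s Msep Mveh t P N b X l ∧
          v = ∑ j, l j} =
      sInf {v : ℝ |
        ∃ t : (j : Fin n) → Fin (q j) → ℝ,
          VSPFeasible q hq W ρ d' τmin τmax s t ∧
          v = ((Finset.univ.filter
            (fun j : Fin n =>
              d j < t j ⟨q j - 1, Nat.sub_lt (hq j) Nat.one_pos⟩)).card : ℝ)} := by
  refine ⟨fun m => ⟨?_, ?_⟩, csInf_eq_csInf_of_forall_exists_le ?_ ?_⟩
  · rintro ⟨t, P, N, b, X, l, hmip, hm⟩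
    exact ⟨t, hmip.vspFeasible, by exact_mod_cast hmip.card_tardyVehicles_le_sum.trans hm⟩
  · rintro ⟨t, hvsp, hm⟩
    obtain ⟨P, N, b, X, l, hmip, hsum⟩ := hvsp.exists_mipConstraints hMsep hMveh
    exact ⟨t, P, N, b, X, l, hmip, hsum ▸ by exact_mod_cast hm⟩
  · rintro _ ⟨t, P, N, b, X, l, hmip, rfl⟩
    exact ⟨_, ⟨t, hmip.vspFeasible, rfl⟩, hmip.card_tardyVehicles_le_sum⟩
  · rintro _ ⟨t, hvsp, rfl⟩
    obtain ⟨P, N, b, X, l, hmip, hsum⟩ := hvsp.exists_mipConstraints hMsep hMveh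
    exact ⟨_, ⟨t, P, N, b, X, l, hmip, rfl⟩, hsum.le⟩

/-- Under nonnegative separation constants and sufficiently
large big-M constants (`d'_{j'} − ρ_{j''} ≤ M` for every constrained pair and
all `j', j''`, and `d_j − ρ_j ≤ M_j`, `d'_j − d_j ≤ M_j`), for every natural
number `m` there is an assignment of all MIP variables `(t, P, N, b, X, l)`
satisfying all MIP constraints with `∑_j l_j ≤ m` iff there is a VSP-feasible
schedule with at most `m` tardy vehicles. Consequently, the optimal value of
the MIP objective `∑_j l_j` equals the minimum number of tardy vehicles over
all VSP-feasible schedules. -/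
theorem mip_optimum_eq_min_tardy_vehicles
    {n : ℕ} {V : Type} (q : Fin n → ℕ) (hq : ∀ j, 0 < q j)
    (W : (j : Fin n) → Fin (q j) → V)
    (ρ d d' : Fin n → ℝ)
    (τmin τmax : (j : Fin n) → Fin (q j) → ℝ)
    (s Msep : (j1 j2 : Fin n) → Fin (q j1) → Fin (q j2) → ℝ)
    (Mveh : Fin n → ℝ)
    (hs : ∀ (j1 j2 : Fin n) (i1 : Fin (q j1)) (i2 : Fin (q j2)),
        j1 ≠ j2 → W j1 i1 = W j2 i2 → 0 ≤ s j1 j2 i1 i2)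
    (hMsep : ∀ (j1 j2 : Fin n) (i1 : Fin (q j1)) (i2 : Fin (q j2)),
        j1 ≠ j2 → W j1 i1 = W j2 i2 →
        ∀ j' j'' : Fin n, d' j' - ρ j'' ≤ Msep j1 j2 i1 i2)
    (hMveh : ∀ j : Fin n, d j - ρ j ≤ Mveh j ∧ d' j - d j ≤ Mveh j) :
    (∀ m : ℕ,
      (∃ (t : (j : Fin n) → Fin (q j) → ℝ)
         (P N b : (j1 j2 : Fin n) → Fin (q j1) → Fin (q j2) → ℝ)
         (X l : Fin n → ℝ),
        MIPConstraints q hq W ρ d d' τmin τmax s Msep Mveh t P N b X l ∧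
        ∑ j, l j ≤ (m : ℝ))
      ↔
      (∃ t : (j : Fin n) → Fin (q j) → ℝ,
        VSPFeasible q hq W ρ d' τmin τmax s t ∧
        (Finset.univ.filter
          (fun j : Fin n =>
            d j < t j ⟨q j - 1, Nat.sub_lt (hq j) Nat.one_pos⟩)).card ≤ m)) ∧
    sInf {v : ℝ |
        ∃ (t : (j : Fin n) → Fin (q j) → ℝ)
          (P N b : (j1 j2 : Fin n) → Fin (q j1) → Fin (q j2) → ℝ)
          (X l : Fin n → ℝ),
          MIPConstraints q hq W ρ d d' τmin τmax s Msep Mveh t P N b X l ∧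
          v = ∑ j, l j} =
      sInf {v : ℝ |
        ∃ t : (j : Fin n) → Fin (q j) → ℝ,
          VSPFeasible q hq W ρ d' τmin τmax s t ∧
          v = ((Finset.univ.filter
            (fun j : Fin n =>
              d j < t j ⟨q j - 1, Nat.sub_lt (hq j) Nat.one_pos⟩)).card : ℝ)} :=
  mip_optimum_eq_min_tardy_vehicles_general q hq W ρ d d' τmin τmax s Msep Mveh hMsep hMveh
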